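/- arXiv:2302.07945 — 6 statements merged into one kernel-verified Lean document; each statement's English description precedes it below -/
import Mathlib

section
/- The Bose–Einstein integral evaluates as ∫₀^∞ x³/(eˣ − 1) dx = π⁴/15. -/
/-!
Expanding `1 / (eˣ - 1) = ∑_{n ≥ 1} e^{-n x}` and integrating term by term against `x ^ (s - 1)`
gives `∫₀^∞ x ^ (s - 1) / (eˣ - 1) dx = Γ(s) ζ(s)` for `Re s > 1`. At `s = 4` this is
`3! · ζ(4) = 6 · π⁴ / 90`.
-/

open Real MeasureTheory Set
open scoped Nat

lemma hasSum_exp_neg_nat_add_one_mul {t : ℝ} (ht : 0 < t) :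
    HasSum (fun n : ℕ => rexp (-(n + 1 : ℝ) * t)) (rexp t - 1)⁻¹ := by
  have hq : rexp (-t) < 1 := exp_lt_one_iff.mpr (neg_lt_zero.mpr ht)
  have hterm (n : ℕ) : rexp (-(n + 1 : ℝ) * t) = rexp (-t) * rexp (-t) ^ n := by
    rw [← _root_.pow_succ', ← exp_nat_mul]
    push_cast
    ring_nf
  have hsum : (rexp t - 1)⁻¹ = rexp (-t) * (1 - rexp (-t))⁻¹ := by
    have hne : rexp t - 1 ≠ 0 := sub_ne_zero.mpr (one_lt_exp_iff.mpr ht).ne'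
    have hfrac : 1 - (rexp t)⁻¹ = (rexp t - 1) / rexp t := by field_simp
    rw [exp_neg, hfrac]
    field_simp
  simp_rw [hterm, hsum]
  exact (hasSum_geometric_of_lt_one (exp_nonneg (-t)) hq).mul_left (rexp (-t))

lemma mellin_inv_exp_sub_one {s : ℂ} (hs : 1 < s.re) :
    mellin (fun t : ℝ => (((rexp t - 1)⁻¹ : ℝ) : ℂ)) s = Complex.Gamma s * riemannZeta s := by
  have hsum := hasSum_mellin (a := fun _ : ℕ => (1 : ℂ)) (p := fun n => (n + 1 : ℝ))
    (F := fun t : ℝ => (((rexp t - 1)⁻¹ : ℝ) : ℂ)) (fun _ => Or.inr (by positivity))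
    (by linarith) (fun t ht => by
      simpa using Complex.hasSum_ofReal.mpr (hasSum_exp_neg_nat_add_one_mul ht))
    (by simpa using (summable_nat_add_iff 1).mpr (Real.summable_one_div_nat_rpow.mpr hs))
  rw [← hsum.tsum_eq, zeta_eq_tsum_one_div_nat_add_one_cpow hs, ← tsum_mul_left]
  push_cast
  simp only [mul_one, mul_one_div]

theorem integral_pow_div_exp_sub_one {k : ℕ} (hk : 0 < k) :
    ((∫ x in Ioi (0 : ℝ), x ^ k / (rexp x - 1) : ℝ) : ℂ) = k ! * riemannZeta (k + 1) := by
  have hs : 1 < (k + 1 : ℂ).re := by simpa using hk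
  rw [← Complex.Gamma_nat_eq_factorial, ← mellin_inv_exp_sub_one hs, mellin,
    ← integral_complex_ofReal]
  refine setIntegral_congr_fun measurableSet_Ioi fun x _ => ?_
  rw [add_sub_cancel_right, Complex.cpow_natCast, smul_eq_mul]
  push_cast
  ring

theorem bose_einstein_integral :
    ∫ x in Set.Ioi (0 : ℝ), x ^ 3 / (Real.exp x - 1) = π ^ 4 / 15 := by
  apply Complex.ofReal_injective
  rw [integral_pow_div_exp_sub_one (by norm_num : 0 < 3)]
  norm_num [riemannZeta_four, Nat.factorial]
  ring
end

section
/- Let h, k, c, T > 0. Then the total radiant flux of the Planck distribution satisfies 4π · ∫₀^∞ (2hν³/c²)·1/(exp(hν/(kT)) − 1) dν = a c T⁴, where a = 8π⁵k⁴/(15h³c³) is the radiation constant. (The factor 4π is the measure of the unit sphere S², over which the isotropic Planck distribution is constant.) -/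
/-!
Expanding `1 / (exp x - 1) = ∑_{m ≥ 1} exp (-m x)` and integrating term by term with
`∫₀^∞ tⁿ exp (-r t) dt = n! / r^(n+1)` gives the Bose integral
`∫₀^∞ tⁿ / (exp (b t) - 1) dt = n! ζ(n+1) / b^(n+1)`. With `n = 3`, `b = h / (k T)` and
`ζ(4) = π⁴ / 90` the constants combine into `a c T⁴`.
-/

open Real MeasureTheory Set
open scoped Nat

lemma integral_pow_mul_exp_neg_mul_Ioi (n : ℕ) {r : ℝ} (hr : 0 < r) :
    ∫ t in Ioi (0 : ℝ), t ^ n * exp (-(r * t)) = n ! / r ^ (n + 1) := by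
  have h := integral_rpow_mul_exp_neg_mul_Ioi (a := n + 1) (by positivity) hr
  rw [add_sub_cancel_right, Gamma_nat_eq_factorial, ← Nat.cast_add_one, Real.rpow_natCast] at h
  rw [div_eq_inv_mul, ← inv_pow, ← one_div, ← h]
  exact setIntegral_congr_fun measurableSet_Ioi fun t _ ↦ by rw [Real.rpow_natCast]

lemma integrableOn_pow_mul_exp_neg_mul_Ioi (n : ℕ) {r : ℝ} (hr : 0 < r) :
    IntegrableOn (fun t : ℝ ↦ t ^ n * exp (-(r * t))) (Ioi 0) := by
  refine (integrableOn_rpow_mul_exp_neg_mul_rpow (p := 1) (s := n)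
    (by linarith [n.cast_nonneg (α := ℝ)]) one_pos hr).congr_fun (fun t _ ↦ ?_) measurableSet_Ioi
  simp only [Real.rpow_one, Real.rpow_natCast, neg_mul]

lemma hasSum_exp_neg_succ_mul {x : ℝ} (hx : 0 < x) :
    HasSum (fun m : ℕ ↦ exp (-((m + 1) * x))) (1 / (exp x - 1)) := by
  have hq : exp (-x) < 1 := exp_lt_one_iff.mpr (neg_lt_zero.mpr hx)
  have hsum := (hasSum_geometric_of_lt_one (exp_pos _).le hq).mul_left (exp (-x))
  have hx1 : exp x - 1 ≠ 0 := (sub_pos.mpr (one_lt_exp_iff.mpr hx)).ne'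
  rw [show exp (-x) * (1 - exp (-x))⁻¹ = 1 / (exp x - 1) by rw [exp_neg]; field_simp] at hsum
  refine hsum.congr_fun fun m ↦ ?_
  rw [← exp_nat_mul, ← exp_add]
  ring_nf

lemma tsum_one_div_succ_pow_four : ∑' m : ℕ, 1 / ((m : ℝ) + 1) ^ 4 = π ^ 4 / 90 := by
  have h := (hasSum_nat_add_iff' 1).mpr hasSum_zeta_four
  simp only [Finset.range_one, Finset.sum_singleton, Nat.cast_zero, Nat.cast_add, Nat.cast_one] at h
  norm_num at h
  simpa using h.tsum_eq

lemma integral_pow_div_exp_mul_sub_one {n : ℕ} (hn : n ≠ 0) {b : ℝ} (hb : 0 < b) :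
    ∫ t in Ioi (0 : ℝ), t ^ n / (exp (b * t) - 1) =
      n ! / b ^ (n + 1) * ∑' m : ℕ, 1 / ((m : ℝ) + 1) ^ (n + 1) := by
  set F : ℕ → ℝ → ℝ := fun m t ↦ t ^ n * exp (-(((m + 1) * b) * t))
  have hF_int (m : ℕ) : IntegrableOn (F m) (Ioi 0) :=
    integrableOn_pow_mul_exp_neg_mul_Ioi n (by positivity)
  have hF_integral (m : ℕ) :
      ∫ t in Ioi 0, F m t = n ! / b ^ (n + 1) * (1 / ((m : ℝ) + 1) ^ (n + 1)) := by
    rw [integral_pow_mul_exp_neg_mul_Ioi n (by positivity), mul_pow]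
    field_simp
  have hF_norm (m : ℕ) : ∫ t in Ioi 0, ‖F m t‖ = ∫ t in Ioi 0, F m t :=
    setIntegral_congr_fun measurableSet_Ioi fun t (ht : 0 < t) ↦ norm_of_nonneg (by positivity)
  have hsummable : Summable fun m : ℕ ↦ 1 / ((m : ℝ) + 1) ^ (n + 1) := by
    have := (summable_nat_add_iff 1).mpr (Real.summable_one_div_nat_pow.mpr (by omega : 1 < n + 1))
    exact_mod_cast this
  have hS : HasSum (fun m : ℕ ↦ n ! / b ^ (n + 1) * (1 / ((m : ℝ) + 1) ^ (n + 1)))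
      (∫ t in Ioi 0, ∑' m, F m t) := by
    simpa only [hF_integral] using hasSum_integral_of_summable_integral_norm hF_int
      (by simpa only [hF_norm, hF_integral] using hsummable.mul_left (n ! / b ^ (n + 1)))
  rw [← hsummable.tsum_mul_left, hS.tsum_eq]
  refine setIntegral_congr_fun measurableSet_Ioi fun t (ht : 0 < t) ↦ ?_
  rw [div_eq_mul_one_div]
  exact (((hasSum_exp_neg_succ_mul (mul_pos hb ht)).mul_left (t ^ n)).congr_fun
    fun m ↦ by simp only [F, mul_assoc]).tsum_eq.symm

theorem planck_integral_radiant_flux_general (h k c T : ℝ)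
    (hh : 0 < h) (hk : 0 < k) (hT : 0 < T) :
    4 * π * ∫ ν in Set.Ioi (0 : ℝ),
        (2 * h * ν ^ 3 / c ^ 2) * (1 / (Real.exp (h * ν / (k * T)) - 1)) =
      (8 * π ^ 5 * k ^ 4 / (15 * h ^ 3 * c ^ 3)) * c * T ^ 4 := by
  have hb : 0 < h / (k * T) := by positivity
  have hintegrand : (fun ν : ℝ ↦ (2 * h * ν ^ 3 / c ^ 2) * (1 / (exp (h * ν / (k * T)) - 1))) =
      fun ν ↦ 2 * h / c ^ 2 * (ν ^ 3 / (exp (h / (k * T) * ν) - 1)) := by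
    funext ν
    rw [div_mul_eq_mul_div]
    ring_nf
  rw [hintegrand, integral_const_mul, integral_pow_div_exp_mul_sub_one three_ne_zero hb,
    tsum_one_div_succ_pow_four]
  norm_num [Nat.factorial]
  field_simp
  norm_num

/-- Integrating the Planck black-body distribution `B(ν,T) = (2hν³/c²)/(exp(hν/(kT)) − 1)`
over all frequencies `ν ∈ (0,∞)` and over the unit sphere (measure `4π`) gives the
radiant flux `φ = a c T⁴`, with radiation constant `a = 8π⁵k⁴/(15h³c³)`. -/
theorem planck_integral_radiant_flux (h k c T : ℝ)
    (hh : 0 < h) (hk : 0 < k) (hc : 0 < c) (hT : 0 < T) :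
    4 * π * ∫ ν in Set.Ioi (0 : ℝ),
        (2 * h * ν ^ 3 / c ^ 2) * (1 / (Real.exp (h * ν / (k * T)) - 1)) =
      (8 * π ^ 5 * k ^ 4 / (15 * h ^ 3 * c ^ 3)) * c * T ^ 4 :=
  planck_integral_radiant_flux_general h k c T hh hk hT
end

section
/- Fix c, σ, t > 0, and for ε > 0 set ν(ε) = cσ/ε². Define c₁(ε) = (1/(4π))(1 − e^{−ν(ε)t}), c₂(ε) = −(1/(4π))(c/(εν(ε)))(1 − e^{−ν(ε)t}) + (1/(4π))(c/ε) t e^{−ν(ε)t}, c₃(ε) = −(1/(4π))(1/ν(ε))(1 − e^{−ν(ε)t}) + t/(4π), c₄(ε) = e^{−ν(ε)t}, and c₅(ε) = (1/(4π))(c/ε) t e^{−ν(ε)t}. Then as ε → ∞: c₁(ε) → 0, c₂(ε) → 0, c₃(ε) → 0, c₄(ε) → 1, and c₅(ε) → 0. Consequently, in the optically thin limit the integral solution degenerates to the collisionless evolution I(x, Ω, t) = I₀(x₀). -/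
/-!
As `ε → ∞` the interaction coefficient `ν = cσ/ε²` tends to `0` through nonzero values, so
`e^{-νt} → 1` and, being a difference quotient of `ν ↦ 1 - e^{-νt}` at `0`,
`(1 - e^{-νt})/ν → t`. Every coefficient is a continuous expression in `c/ε`, `e^{-νt}` and
this quotient, and the two `t/(4π)` terms of `c₃` cancel in the limit.
-/

open Real Filter Topology

theorem tendsto_one_sub_exp_neg_mul_div_nhdsNE (t : ℝ) :
    Tendsto (fun x : ℝ => (1 - exp (-x * t)) / x) (𝓝[≠] 0) (𝓝 t) := by
  have hderiv : HasDerivAt (fun x : ℝ => 1 - exp (-x * t)) t 0 := by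
    simpa using ((hasDerivAt_id (0 : ℝ)).neg.mul_const t).exp.const_sub 1
  simpa [div_eq_inv_mul] using hderiv.tendsto_slope_zero

theorem tendsto_const_div_sq_atTop_nhdsNE {a : ℝ} (ha : a ≠ 0) :
    Tendsto (fun ε : ℝ => a / ε ^ 2) atTop (𝓝[≠] 0) := by
  refine tendsto_nhdsWithin_iff.2
    ⟨tendsto_const_nhds.div_atTop (tendsto_pow_atTop two_ne_zero), ?_⟩
  filter_upwards [eventually_ne_atTop 0] with ε hε
  exact div_ne_zero ha (pow_ne_zero 2 hε)

theorem optically_thin_limit_coefficients_general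
    (c σ t : ℝ) (hc : 0 < c) (hσ : 0 < σ)
    (ν c₁ c₂ c₃ c₄ c₅ : ℝ → ℝ)
    (hν : ∀ ε, ν ε = c * σ / ε ^ 2)
    (hc₁ : ∀ ε, c₁ ε = (1 / (4 * π)) * (1 - Real.exp (-(ν ε) * t)))
    (hc₂ : ∀ ε, c₂ ε = -(1 / (4 * π)) * (c / (ε * ν ε)) * (1 - Real.exp (-(ν ε) * t)) +
        (1 / (4 * π)) * (c / ε) * t * Real.exp (-(ν ε) * t))
    (hc₃ : ∀ ε, c₃ ε = -(1 / (4 * π)) * (1 / ν ε) * (1 - Real.exp (-(ν ε) * t)) +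
        t / (4 * π))
    (hc₄ : ∀ ε, c₄ ε = Real.exp (-(ν ε) * t))
    (hc₅ : ∀ ε, c₅ ε = (1 / (4 * π)) * (c / ε) * t * Real.exp (-(ν ε) * t)) :
    Tendsto c₁ atTop (nhds 0) ∧
    Tendsto c₂ atTop (nhds 0) ∧
    Tendsto c₃ atTop (nhds 0) ∧
    Tendsto c₄ atTop (nhds 1) ∧
    Tendsto c₅ atTop (nhds 0) ∧
    ∀ A B C D E : ℝ,
      Tendsto (fun ε => c₁ ε * A + c₂ ε * B + c₃ ε * C + c₄ ε * D + c₅ ε * E)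
        atTop (nhds D) := by
  have hν₀ : Tendsto ν atTop (𝓝[≠] 0) := by
    simpa only [← funext hν] using tendsto_const_div_sq_atTop_nhdsNE (mul_pos hc hσ).ne'
  have hexp : Tendsto (fun ε => exp (-ν ε * t)) atTop (𝓝 1) := by
    simpa using ((tendsto_nhds_of_tendsto_nhdsWithin hν₀).neg.mul_const t).rexp
  have hquot := (tendsto_one_sub_exp_neg_mul_div_nhdsNE t).comp hν₀
  have hinv : Tendsto (fun ε : ℝ => c / ε) atTop (𝓝 0) :=
    tendsto_const_nhds.div_atTop tendsto_id
  have h₁ : Tendsto c₁ atTop (𝓝 0) := by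
    simpa [funext hc₁] using
      ((tendsto_const_nhds (x := (1 : ℝ))).sub hexp).const_mul (1 / (4 * π))
  have h₂ : Tendsto c₂ atTop (𝓝 0) := by
    have : c₂ = fun ε =>
        c / ε * (t * exp (-ν ε * t) - (1 - exp (-ν ε * t)) / ν ε) / (4 * π) := by
      funext ε; rw [hc₂]; ring
    simpa [this] using ((hinv.mul ((hexp.const_mul t).sub hquot)).div_const (4 * π))
  have h₃ : Tendsto c₃ atTop (𝓝 0) := by
    have : c₃ = fun ε => (t - (1 - exp (-ν ε * t)) / ν ε) / (4 * π) := by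
      funext ε; rw [hc₃]; ring
    simpa [this] using ((tendsto_const_nhds (x := t)).sub hquot).div_const (4 * π)
  have h₄ : Tendsto c₄ atTop (𝓝 1) := by
    simpa [funext hc₄] using hexp
  have h₅ : Tendsto c₅ atTop (𝓝 0) := by
    simpa [funext hc₅] using ((hinv.const_mul (1 / (4 * π))).mul_const t).mul hexp
  refine ⟨h₁, h₂, h₃, h₄, h₅, fun A B C D E => ?_⟩
  simpa using ((((h₁.mul_const A).add (h₂.mul_const B)).add (h₃.mul_const C)).add
    (h₄.mul_const D)).add (h₅.mul_const E)

/-- Optically thin limit `ε → ∞` of the coefficients of the integral solution: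
`c₁ → 0`, `c₂ → 0`, `c₃ → 0`, `c₄ → 1`, `c₅ → 0`, and consequently the integral
solution `c₁φ₀ + c₂ Ω·∇φ₀ + c₃ ∂ₜφ₀ + c₄ I₀ + c₅ Ω·∇I₀` degenerates to the
collisionless evolution `I = I₀(x₀)`. -/
theorem optically_thin_limit_coefficients
    (c σ t : ℝ) (hc : 0 < c) (hσ : 0 < σ) (ht : 0 < t)
    (ν c₁ c₂ c₃ c₄ c₅ : ℝ → ℝ)
    (hν : ∀ ε, ν ε = c * σ / ε ^ 2)
    (hc₁ : ∀ ε, c₁ ε = (1 / (4 * π)) * (1 - Real.exp (-(ν ε) * t)))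
    (hc₂ : ∀ ε, c₂ ε = -(1 / (4 * π)) * (c / (ε * ν ε)) * (1 - Real.exp (-(ν ε) * t)) +
        (1 / (4 * π)) * (c / ε) * t * Real.exp (-(ν ε) * t))
    (hc₃ : ∀ ε, c₃ ε = -(1 / (4 * π)) * (1 / ν ε) * (1 - Real.exp (-(ν ε) * t)) +
        t / (4 * π))
    (hc₄ : ∀ ε, c₄ ε = Real.exp (-(ν ε) * t))
    (hc₅ : ∀ ε, c₅ ε = (1 / (4 * π)) * (c / ε) * t * Real.exp (-(ν ε) * t)) :
    Tendsto c₁ atTop (nhds 0) ∧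
    Tendsto c₂ atTop (nhds 0) ∧
    Tendsto c₃ atTop (nhds 0) ∧
    Tendsto c₄ atTop (nhds 1) ∧
    Tendsto c₅ atTop (nhds 0) ∧
    ∀ A B C D E : ℝ,
      Tendsto (fun ε => c₁ ε * A + c₂ ε * B + c₃ ε * C + c₄ ε * D + c₅ ε * E)
        atTop (nhds D) :=
  optically_thin_limit_coefficients_general c σ t hc hσ ν c₁ c₂ c₃ c₄ c₅ hν hc₁ hc₂ hc₃ hc₄ hc₅
end

section
/- For every x > 0 one has 0 < ( x − 2 + e^{−x} ( x + 2 ) ) / x < 1. -/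
/-!
Write `g x = x - 2 + e^{-x}(x + 2)` for the numerator. Then `g 0 = 0` and
`g' x = 1 - e^{-x}(x + 1)`, which is positive for `x > 0` because `x + 1 < e^x`; so `g` is strictly
increasing on `[0, ∞)` and the limiter is positive. The upper bound `g x < x` amounts to
`x + 2 < 2 e^x`, which again follows from `x + 1 < e^x`.
-/

open Real Set

lemma exp_neg_mul_add_one_lt_one {y : ℝ} (hy : y ≠ 0) : exp (-y) * (y + 1) < 1 := by
  rw [exp_neg, inv_mul_lt_iff₀ (exp_pos y), mul_one]
  exact add_one_lt_exp hy

lemma exp_neg_mul_add_two_lt_two {x : ℝ} (hx : 0 < x) : exp (-x) * (x + 2) < 2 := by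
  rw [exp_neg, inv_mul_lt_iff₀ (exp_pos x)]
  linarith [add_one_lt_exp hx.ne']

lemma hasDerivAt_fluxLimiter_numerator (y : ℝ) :
    HasDerivAt (fun z => z - 2 + exp (-z) * (z + 2)) (1 - exp (-y) * (y + 1)) y := by
  have hexp : HasDerivAt (fun z => exp (-z)) (-exp (-y)) y := by
    simpa using (hasDerivAt_neg y).exp
  exact (((hasDerivAt_id' y).sub_const 2).add
    (hexp.mul ((hasDerivAt_id' y).add_const 2))).congr_deriv (by ring)

lemma strictMonoOn_fluxLimiter_numerator :
    StrictMonoOn (fun z => z - 2 + exp (-z) * (z + 2)) (Ici 0) := by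
  refine strictMonoOn_of_deriv_pos (convex_Ici 0)
    (fun y _ => (hasDerivAt_fluxLimiter_numerator y).continuousAt.continuousWithinAt) ?_
  intro y hy
  rw [interior_Ici] at hy
  rw [(hasDerivAt_fluxLimiter_numerator y).deriv, sub_pos]
  exact exp_neg_mul_add_one_lt_one (ne_of_gt hy)

lemma fluxLimiter_numerator_pos {x : ℝ} (hx : 0 < x) : 0 < x - 2 + exp (-x) * (x + 2) := by
  simpa using strictMonoOn_fluxLimiter_numerator self_mem_Ici hx.le hx

/-- The UGKP flux limiter `𝓛_p(x) = (x − 2 + e^{−x}(x+2))/x` satisfies `0 < 𝓛_p(x) < 1`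
for all `x > 0`. -/
theorem ugkp_flux_limiter_bounds (x : ℝ) (hx : 0 < x) :
    0 < (x - 2 + Real.exp (-x) * (x + 2)) / x ∧
    (x - 2 + Real.exp (-x) * (x + 2)) / x < 1 := by
  refine ⟨div_pos (fluxLimiter_numerator_pos hx) hx, ?_⟩
  rw [div_lt_one hx]
  linarith [exp_neg_mul_add_two_lt_two hx]
end

section
/- For every x > 0 one has 0 < ( x − 1 + e^{−2x} ( x + 1 ) ) / x < 1. -/
open Real

lemma ugkwp_num_pos (x : ℝ) (hx : 0 < x) :
    0 < x - 1 + Real.exp (-2 * x) * (x + 1) := by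
  have hmono : StrictMonoOn (fun y : ℝ => y - 1 + Real.exp (-2 * y) * (y + 1))
      (Set.Ici (0 : ℝ)) := by
    apply strictMonoOn_of_deriv_pos (convex_Ici 0)
    · fun_prop
    · intro y hy
      rw [interior_Ici] at hy
      have h1 : HasDerivAt (fun y : ℝ => Real.exp (-2 * y)) (-2 * Real.exp (-2 * y)) y := by
        have := ((hasDerivAt_id y).const_mul (-2 : ℝ)).exp
        simpa [mul_comm] using this
      have h2 : HasDerivAt (fun y : ℝ => Real.exp (-2 * y) * (y + 1))
          (-2 * Real.exp (-2 * y) * (y + 1) + Real.exp (-2 * y) * 1) y :=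
        h1.mul ((hasDerivAt_id y).add_const 1)
      have h3 : HasDerivAt (fun y : ℝ => y - 1 + Real.exp (-2 * y) * (y + 1))
          (1 + (-2 * Real.exp (-2 * y) * (y + 1) + Real.exp (-2 * y) * 1)) y :=
        ((hasDerivAt_id y).sub_const 1).add h2
      rw [h3.deriv]
      have he : 2 * y + 1 < Real.exp (2 * y) :=
        Real.add_one_lt_exp (by have hy' := Set.mem_Ioi.mp hy; intro h; linarith)
      have hinv : Real.exp (-2 * y) * Real.exp (2 * y) = 1 := by
        rw [← Real.exp_add]; norm_num
      have hp : (0:ℝ) < Real.exp (-2 * y) := Real.exp_pos _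
      nlinarith [mul_pos hp (sub_pos.mpr he)]
  have h0 : (0:ℝ) ∈ Set.Ici (0:ℝ) := Set.self_mem_Ici
  have hxm : x ∈ Set.Ici (0:ℝ) := le_of_lt hx
  have := hmono h0 hxm hx
  simpa using this

/-- The UGKWP flux limiter `𝓛_wp(x) = (x − 1 + e^{−2x}(x+1))/x` satisfies
`0 < 𝓛_wp(x) < 1` for all `x > 0`. -/
theorem ugkwp_flux_limiter_bounds (x : ℝ) (hx : 0 < x) :
    0 < (x - 1 + Real.exp (-2 * x) * (x + 1)) / x ∧
    (x - 1 + Real.exp (-2 * x) * (x + 1)) / x < 1 := by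
  constructor
  · exact div_pos (ugkwp_num_pos x hx) hx
  · rw [div_lt_one hx]
    have he : 2 * x + 1 < Real.exp (2 * x) := Real.add_one_lt_exp (by intro h; linarith)
    have hinv : Real.exp (-2 * x) * Real.exp (2 * x) = 1 := by
      rw [← Real.exp_add]; norm_num
    have hp : (0:ℝ) < Real.exp (-2 * x) := Real.exp_pos _
    nlinarith [mul_pos hp (sub_pos.mpr he)]
end

section
/- Let θᵢ, θⱼ, θᵢⱼ ∈ (−π/2, π/2) and dᵢ, dⱼ, dᵢⱼ > 0 satisfy the geometric compatibility relations dᵢ cos θᵢ + dⱼ cos θⱼ = dᵢⱼ cos θᵢⱼ and dᵢ sin θᵢ + dⱼ sin θⱼ = dᵢⱼ sin θᵢⱼ. Let φᵢ, φⱼ, φ_m, g, D ∈ ℝ satisfy the two one-sided reconstructions D = ((φ_m − φᵢ)/dᵢ) sec θᵢ + g tan θᵢ and D = ((φⱼ − φ_m)/dⱼ) sec θⱼ + g tan θⱼ. Then D = ((φⱼ − φᵢ)/dᵢⱼ) sec θᵢⱼ + g tan θᵢⱼ. -/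
open Real

/-- Nine-point discretization of the interface-normal derivative on a general mesh:
if the two one-sided reconstructions of `∇φ_m·n` across the interface agree
(flux continuity), then `∇φ_m·n` is given by the cell-center difference formula. -/
theorem nine_point_normal_derivative
    (θi θj θij : ℝ)
    (hθi : θi ∈ Set.Ioo (-(π / 2)) (π / 2))
    (hθj : θj ∈ Set.Ioo (-(π / 2)) (π / 2))
    (hθij : θij ∈ Set.Ioo (-(π / 2)) (π / 2))
    (di dj dij : ℝ) (hdi : 0 < di) (hdj : 0 < dj) (hdij : 0 < dij)
    (hcos : di * Real.cos θi + dj * Real.cos θj = dij * Real.cos θij)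
    (hsin : di * Real.sin θi + dj * Real.sin θj = dij * Real.sin θij)
    (φi φj φm g D : ℝ)
    (hleft : D = ((φm - φi) / di) * (1 / Real.cos θi) + g * Real.tan θi)
    (hright : D = ((φj - φm) / dj) * (1 / Real.cos θj) + g * Real.tan θj) :
    D = ((φj - φi) / dij) * (1 / Real.cos θij) + g * Real.tan θij := by
  have hci : 0 < Real.cos θi := Real.cos_pos_of_mem_Ioo hθi
  have hcj : 0 < Real.cos θj := Real.cos_pos_of_mem_Ioo hθj
  have hcij : 0 < Real.cos θij := Real.cos_pos_of_mem_Ioo hθij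
  have h1 : φm - φi = di * (D * Real.cos θi - g * Real.sin θi) := by
    rw [Real.tan_eq_sin_div_cos] at hleft
    field_simp at hleft
    nlinarith [hleft]
  have h2 : φj - φm = dj * (D * Real.cos θj - g * Real.sin θj) := by
    rw [Real.tan_eq_sin_div_cos] at hright
    field_simp at hright
    nlinarith [hright]
  have h3 : φj - φi = dij * (D * Real.cos θij - g * Real.sin θij) := by
    linear_combination h1 + h2 + D * hcos - g * hsin
  rw [Real.tan_eq_sin_div_cos]
  field_simp
  nlinarith [h3]
end
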